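/- Deterministic one-step SAM descent inequality: let f have L-Lipschitz gradient, let x ∈ ℝⁿ, let ε be any vector with ‖ε‖ = ρ, and set x⁺ = x − η∇f(x + ε). Then f(x⁺) − f(x) ≤ −(η − (3/2)Lη²)‖∇f(x)‖² + Lρ²/2 + L³η²ρ². -/

import Mathlib

/-!
The descent lemma for an `L`-smooth `f` bounds `f (x - η g') - f x` by
`-η ⟪∇f x, g'⟫ + (L/2) η² ‖g'‖²`, where `g' = ∇f (x + ε)` differs from `∇f x` by at most `L ρ`.
Splitting `⟪∇f x, g'⟫ = ‖∇f x‖² + ⟪∇f x, g' - ∇f x⟫`, Young's inequality controls the cross term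
by `(L η² / 2) ‖∇f x‖² + L ρ² / 2`, and `‖g'‖² ≤ 2 L² ρ² + 2 ‖∇f x‖²` controls the quadratic term.
-/

open scoped RealInnerProductSpace

lemma sq_norm_le_of_norm_sub_le {G : Type*} [SeminormedAddGroup G] {a b : G} {r : ℝ}
    (h : ‖b - a‖ ≤ r) :
    ‖b‖ ^ 2 ≤ 2 * r ^ 2 + 2 * ‖a‖ ^ 2 :=
  calc ‖b‖ ^ 2 ≤ (r + ‖a‖) ^ 2 := by
        gcongr
        linarith [norm_le_norm_sub_add b a]
    _ ≤ 2 * r ^ 2 + 2 * ‖a‖ ^ 2 := by linarith [add_sq_le (a := r) (b := ‖a‖)]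

variable {E : Type*} [NormedAddCommGroup E] [InnerProductSpace ℝ E]

lemma neg_mul_inner_le_of_norm_le {L η ρ : ℝ} (hL : 0 < L) {a b : E} (hb : ‖b‖ ≤ L * ρ) :
    -(η * ⟪a, b⟫) ≤ L * η ^ 2 / 2 * ‖a‖ ^ 2 + L * ρ ^ 2 / 2 :=
  calc -(η * ⟪a, b⟫) ≤ |η| * |⟪a, b⟫| := by rw [← abs_mul]; exact neg_le_abs _
    _ ≤ |η| * (‖a‖ * ‖b‖) := by gcongr; exact abs_real_inner_le_norm a b
    _ ≤ |η| * (‖a‖ * (L * ρ)) := by gcongr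
    _ = L * (|η| * ‖a‖ * ρ) := by ring
    _ ≤ L * (((|η| * ‖a‖) ^ 2 + ρ ^ 2) / 2) := by
        gcongr; linarith [two_mul_le_add_sq (|η| * ‖a‖) ρ]
    _ = L * η ^ 2 / 2 * ‖a‖ ^ 2 + L * ρ ^ 2 / 2 := by rw [mul_pow, sq_abs]; ring

variable [CompleteSpace E] {f : E → ℝ} {L : ℝ}

lemma hasDerivAt_comp_add_smul {x v : E} {t : ℝ} (hf : DifferentiableAt ℝ f (x + t • v)) :
    HasDerivAt (fun s : ℝ => f (x + s • v)) ⟪gradient f (x + t • v), v⟫ t := by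
  rw [inner_gradient_left]
  have hline : HasDerivAt (fun s : ℝ => x + s • v) v t := by
    simpa using ((hasDerivAt_id t).smul_const v).const_add x
  exact hf.hasFDerivAt.comp_hasDerivAt t hline

lemma le_add_inner_gradient_add_sq (hf : Differentiable ℝ f)
    (hlip : ∀ x y, ‖gradient f x - gradient f y‖ ≤ L * ‖x - y‖) (x v : E) :
    f (x + v) ≤ f x + ⟪gradient f x, v⟫ + L / 2 * ‖v‖ ^ 2 := by
  set φ : ℝ → ℝ := fun t => f (x + t • v) - t * ⟪gradient f x, v⟫ - L / 2 * t ^ 2 * ‖v‖ ^ 2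
  have hφ : ∀ t, HasDerivAt φ (⟪gradient f (x + t • v) - gradient f x, v⟫ - L * t * ‖v‖ ^ 2) t := by
    intro t
    refine (((hasDerivAt_comp_add_smul (hf _)).sub ((hasDerivAt_id t).mul_const _)).sub
      (((hasDerivAt_pow 2 t).const_mul (L / 2)).mul_const (‖v‖ ^ 2))).congr_deriv ?_
    rw [inner_sub_left]
    push_cast
    ring
  have hinner_le : ∀ t, 0 ≤ t →
      ⟪gradient f (x + t • v) - gradient f x, v⟫ ≤ L * t * ‖v‖ ^ 2 := by
    intro t ht
    calc ⟪gradient f (x + t • v) - gradient f x, v⟫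
        ≤ ‖gradient f (x + t • v) - gradient f x‖ * ‖v‖ := real_inner_le_norm _ _
      _ ≤ L * ‖t • v‖ * ‖v‖ := by gcongr; simpa using hlip (x + t • v) x
      _ = L * t * ‖v‖ ^ 2 := by rw [norm_smul, Real.norm_of_nonneg ht]; ring
  have hanti : AntitoneOn φ (Set.Icc 0 1) :=
    antitoneOn_of_hasDerivWithinAt_nonpos (convex_Icc 0 1)
      (fun t _ => (hφ t).continuousAt.continuousWithinAt)
      (fun t _ => (hφ t).hasDerivWithinAt)
      (fun t ht => sub_nonpos.2 (hinner_le t (interior_subset ht).1))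
  have h0 : φ 0 = f x := by simp [φ]
  have h1 : φ 1 = f (x + v) - ⟪gradient f x, v⟫ - L / 2 * ‖v‖ ^ 2 := by simp [φ]
  have hφ_le := hanti (Set.left_mem_Icc.2 zero_le_one) (Set.right_mem_Icc.2 zero_le_one) zero_le_one
  linarith

theorem stmt11_general {n : ℕ} (f : EuclideanSpace ℝ (Fin n) → ℝ) (L η ρ : ℝ)
    (hL : 0 < L)
    (hdiff : Differentiable ℝ f)
    (hlip : ∀ x y, ‖gradient f x - gradient f y‖ ≤ L * ‖x - y‖)
    (x ε : EuclideanSpace ℝ (Fin n)) (hε : ‖ε‖ = ρ) :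
    f (x - η • gradient f (x + ε)) - f x ≤
      -(η - 3 / 2 * L * η ^ 2) * ‖gradient f x‖ ^ 2 + L * ρ ^ 2 / 2 + L ^ 3 * η ^ 2 * ρ ^ 2 := by
  have hperturb : ‖gradient f (x + ε) - gradient f x‖ ≤ L * ρ := by
    simpa [hε] using hlip (x + ε) x
  have hdescent := le_add_inner_gradient_add_sq hdiff hlip x (-(η • gradient f (x + ε)))
  rw [← sub_eq_add_neg, inner_neg_right, real_inner_smul_right, norm_neg, norm_smul, mul_pow,
    Real.norm_eq_abs, sq_abs] at hdescent
  have hsplit : η * ⟪gradient f x, gradient f (x + ε)⟫ =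
      η * ‖gradient f x‖ ^ 2 + η * ⟪gradient f x, gradient f (x + ε) - gradient f x⟫ := by
    rw [inner_sub_right, real_inner_self_eq_norm_sq]; ring
  have hcross := neg_mul_inner_le_of_norm_le (η := η) (a := gradient f x) hL hperturb
  have hquad := mul_le_mul_of_nonneg_left (sq_norm_le_of_norm_sub_le hperturb)
    (by positivity : 0 ≤ L / 2 * η ^ 2)
  linarith

theorem stmt11 {n : ℕ} (f : EuclideanSpace ℝ (Fin n) → ℝ) (L η ρ : ℝ)
    (hL : 0 < L) (hη : 0 < η) (hρ : 0 < ρ)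
    (hdiff : Differentiable ℝ f)
    (hlip : ∀ x y, ‖gradient f x - gradient f y‖ ≤ L * ‖x - y‖)
    (x ε : EuclideanSpace ℝ (Fin n)) (hε : ‖ε‖ = ρ) :
    f (x - η • gradient f (x + ε)) - f x ≤
      -(η - 3 / 2 * L * η ^ 2) * ‖gradient f x‖ ^ 2 + L * ρ ^ 2 / 2 + L ^ 3 * η ^ 2 * ρ ^ 2 :=
  stmt11_general f L η ρ hL hdiff hlip x ε hε
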